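/- arXiv:2212.00958 — 3 statements merged into one kernel-verified Lean document; each statement's English description precedes it below -/
import Mathlib

section
/- Let G be a d-regular λ-expander graph on n vertices, let (X_i) be the simple random walk on G with uniform initial distribution π, let val: V → {0,1} be a labelling with E_π(val) = α ∈ (0,1), and let Z_t = Σ_{i=0}^{t−1} val(X_i). Then |Var(Z_t) − α(1−α)t| ≤ 2α(1−α)t·λ/(1−λ). -/
open Finset Matrix

/-!
Expand `val` in the orthonormal eigenbasis `f` of `P`. With the weights
`w j = ⟨val, f j⟩²` (inner product of the uniform distribution), the correlation of `val(X_i)`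
and `val(X_i')` is `∑ j, w j * lam j ^ |i - i'|`, so `Var Z_t = ∑ j, w j * S_t(lam j) - (α t)²`
where `S_t(μ) = ∑_{i,i' < t} μ ^ |i - i'|`. The trivial eigenvector has weight `α²` and
`S_t(1) = t²`, which cancels `(α t)²`; the other weights add up to `α - α² = α (1 - α)`, and
for `|μ| ≤ λ` the sum `S_t(μ) = t + 2 ∑_{i<t} ∑_{k<i} μ^(k+1)` is within `2 t λ / (1 - λ)` of `t`.
-/

section Spectral

variable {ι K : Type*} [Fintype ι] [DecidableEq ι] [Field K]

theorem transpose_mul_self_eq_smul_one {A : Matrix ι ι K} {c : K} (hc : c ≠ 0)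
    (h : A * Aᵀ = c • 1) : Aᵀ * A = c • 1 := by
  have hinv : A * (c⁻¹ • Aᵀ) = 1 := by
    rw [mul_smul_comm, h, smul_smul, inv_mul_cancel₀ hc, one_smul]
  rw [← one_smul K (Aᵀ * A), ← mul_inv_cancel₀ hc, mul_smul, ← smul_mul_assoc,
    mul_eq_one_comm.mp hinv]

variable {f : ι → ι → K} {c : K}

theorem smul_eq_sum_dotProduct_smul (hc : c ≠ 0)
    (horth : ∀ j k, f j ⬝ᵥ f k = if j = k then c else 0) (g : ι → K) :
    c • g = ∑ j, (g ⬝ᵥ f j) • f j := by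
  have hcol : ∀ y x, ∑ j, f j y * f j x = if y = x then c else 0 := by
    have h : of f * (of f)ᵀ = c • 1 := by
      ext j k
      simpa [mul_apply, one_apply, dotProduct] using horth j k
    intro y x
    have hyx := congr_fun (congr_fun (transpose_mul_self_eq_smul_one hc h) y) x
    simpa [mul_apply, one_apply] using hyx
  ext x
  simp only [Pi.smul_apply, smul_eq_mul, Finset.sum_apply, dotProduct, sum_mul]
  rw [sum_comm]
  simp_rw [mul_assoc, ← mul_sum, hcol]
  simp [mul_comm]

theorem pow_mulVec_eq_smul_of_mulVec_eq_smul {P : Matrix ι ι K} {v : ι → K} {μ : K}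
    (h : P *ᵥ v = μ • v) (m : ℕ) : (P ^ m) *ᵥ v = μ ^ m • v := by
  induction m with
  | zero => simp
  | succ m ih => rw [pow_succ', ← mulVec_mulVec, ih, mulVec_smul, h, smul_smul, pow_succ]

theorem dotProduct_pow_mulVec_div_eq_sum {P : Matrix ι ι K} {lam : ι → K}
    (heig : ∀ j, P *ᵥ f j = lam j • f j) (hc : c ≠ 0)
    (horth : ∀ j k, f j ⬝ᵥ f k = if j = k then c else 0) (g : ι → K) (m : ℕ) :
    g ⬝ᵥ (P ^ m) *ᵥ g / c = ∑ j, lam j ^ m * (g ⬝ᵥ f j / c) ^ 2 := by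
  have h : c * (g ⬝ᵥ (P ^ m) *ᵥ g) = ∑ j, lam j ^ m * (g ⬝ᵥ f j) ^ 2 := by
    rw [← smul_eq_mul, ← dotProduct_smul, ← mulVec_smul, smul_eq_sum_dotProduct_smul hc horth,
      mulVec_sum, dotProduct_sum]
    refine sum_congr rfl fun j _ => ?_
    rw [mulVec_smul, pow_mulVec_eq_smul_of_mulVec_eq_smul (heig j), dotProduct_smul,
      dotProduct_smul]
    simp only [smul_eq_mul]
    ring
  simp_rw [div_pow, mul_div_assoc', ← sum_div, ← h]
  field_simp

end Spectral

def powDistSum (μ : ℝ) (t : ℕ) : ℝ :=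
  ∑ i ∈ range t, ∑ j ∈ range t, μ ^ (max i j - min i j)

theorem sum_range_pow_sub_eq (μ : ℝ) (t : ℕ) :
    ∑ i ∈ range t, μ ^ (t - i) = ∑ k ∈ range t, μ ^ (k + 1) := by
  rw [← sum_range_reflect]
  refine sum_congr rfl fun i hi => ?_
  rw [mem_range] at hi
  congr 1
  omega

theorem powDistSum_eq (μ : ℝ) (t : ℕ) :
    powDistSum μ t = t + 2 * ∑ i ∈ range t, ∑ k ∈ range i, μ ^ (k + 1) := by
  induction t with
  | zero => simp [powDistSum]
  | succ t ih =>
    have hcol : ∑ i ∈ range t, μ ^ (max i t - min i t) = ∑ k ∈ range t, μ ^ (k + 1) := by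
      rw [← sum_range_pow_sub_eq]
      refine sum_congr rfl fun i hi => ?_
      rw [max_eq_right (mem_range.mp hi).le, min_eq_left (mem_range.mp hi).le]
    have hrow : ∑ j ∈ range t, μ ^ (max t j - min t j) = ∑ k ∈ range t, μ ^ (k + 1) := by
      rw [← sum_range_pow_sub_eq]
      refine sum_congr rfl fun j hj => ?_
      rw [max_eq_left (mem_range.mp hj).le, min_eq_right (mem_range.mp hj).le]
    unfold powDistSum at ih ⊢
    simp only [sum_range_succ, sum_add_distrib, hcol, hrow, ih, max_self, min_self,
      Nat.sub_self, pow_zero]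
    push_cast
    ring

theorem abs_sum_range_pow_succ_le {μ lam₀ : ℝ} (hμ : |μ| ≤ lam₀) (hlam₀ : lam₀ < 1) (m : ℕ) :
    |∑ k ∈ range m, μ ^ (k + 1)| ≤ lam₀ / (1 - lam₀) :=
  calc |∑ k ∈ range m, μ ^ (k + 1)| ≤ ∑ k ∈ range m, lam₀ ^ (k + 1) :=
        (abs_sum_le_sum_abs _ _).trans <| sum_le_sum fun k _ => by
          rw [abs_pow]; exact pow_le_pow_left₀ (abs_nonneg μ) hμ _
    _ = ∑ k ∈ Ico 1 (m + 1), lam₀ ^ k := by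
        rw [sum_Ico_eq_sum_range]; simp [add_comm]
    _ ≤ lam₀ / (1 - lam₀) := by
        simpa using
          geom_sum_Ico_le_of_lt_one (m := 1) (n := m + 1) ((abs_nonneg μ).trans hμ) hlam₀

theorem abs_powDistSum_sub_le {μ lam₀ : ℝ} (hμ : |μ| ≤ lam₀) (hlam₀ : lam₀ < 1) (t : ℕ) :
    |powDistSum μ t - t| ≤ 2 * t * (lam₀ / (1 - lam₀)) := by
  rw [powDistSum_eq, add_sub_cancel_left, abs_mul, abs_two, mul_assoc]
  gcongr
  calc |∑ i ∈ range t, ∑ k ∈ range i, μ ^ (k + 1)|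
      ≤ ∑ _i ∈ range t, lam₀ / (1 - lam₀) :=
        (abs_sum_le_sum_abs _ _).trans <| sum_le_sum fun i _ =>
          abs_sum_range_pow_succ_le hμ hlam₀ i
    _ = t * (lam₀ / (1 - lam₀)) := by simp

theorem powDistSum_one (t : ℕ) : powDistSum 1 t = (t : ℝ) ^ 2 := by
  simp [powDistSum, sq]

theorem abs_sum_mul_powDistSum_sub_le {ι : Type*} [Fintype ι] [DecidableEq ι]
    {w lam : ι → ℝ} {j₀ : ι} {α lam₀ : ℝ} (hw : ∀ j, 0 ≤ w j) (hwsum : ∑ j, w j = α)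
    (hw₀ : w j₀ = α ^ 2) (hl₀ : lam j₀ = 1) (hlam₀ : lam₀ < 1)
    (hexp : ∀ j, j ≠ j₀ → |lam j| ≤ lam₀) (t : ℕ) :
    |∑ j, w j * powDistSum (lam j) t - (α * t) ^ 2 - α * (1 - α) * t|
      ≤ 2 * α * (1 - α) * t * (lam₀ / (1 - lam₀)) := by
  have hrest : ∑ j ∈ univ.erase j₀, w j = α * (1 - α) := by
    rw [← add_sum_erase _ _ (mem_univ j₀), hw₀] at hwsum
    linarith
  have hsplit : ∑ j, w j * powDistSum (lam j) t - (α * t) ^ 2 - α * (1 - α) * t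
      = ∑ j ∈ univ.erase j₀, w j * (powDistSum (lam j) t - t) := by
    rw [← add_sum_erase _ _ (mem_univ j₀), hw₀, hl₀, powDistSum_one, ← hrest]
    simp only [mul_sub, sum_sub_distrib, sum_mul]
    ring
  rw [hsplit]
  calc |∑ j ∈ univ.erase j₀, w j * (powDistSum (lam j) t - t)|
      ≤ ∑ j ∈ univ.erase j₀, w j * (2 * t * (lam₀ / (1 - lam₀))) :=
        (abs_sum_le_sum_abs _ _).trans <| sum_le_sum fun j hj => by
          rw [abs_mul, abs_of_nonneg (hw j)]
          exact mul_le_mul_of_nonneg_left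
            (abs_powDistSum_sub_le (hexp j (ne_of_mem_erase hj)) hlam₀ t) (hw j)
    _ = 2 * α * (1 - α) * t * (lam₀ / (1 - lam₀)) := by rw [← sum_mul, hrest]; ring

theorem variance_bound_expander_general (n : ℕ) (hn : 0 < n)
    (P : Matrix (Fin n) (Fin n) ℝ)
    (lam : Fin n → ℝ) (f : Fin n → Fin n → ℝ) (j₀ : Fin n)
    (heig : ∀ j, P *ᵥ f j = lam j • f j)
    (horth : ∀ j k, (∑ x, f j x * f k x / n) = if j = k then (1 : ℝ) else 0)
    (hf0 : ∀ x, f j₀ x = 1) (hl0 : lam j₀ = 1)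
    (lam0 : ℝ) (hlam1 : lam0 < 1)
    (hexp : ∀ j, j ≠ j₀ → |lam j| ≤ lam0)
    (val : Fin n → ℕ) (hval : ∀ v, val v = 0 ∨ val v = 1)
    (α : ℝ) (hα : α = (∑ x, (val x : ℝ)) / n)
    (varZ : ℕ → ℝ)
    (hvar : ∀ t, varZ t =
      (∑ i ∈ Finset.range t, ∑ j ∈ Finset.range t, ∑ x, ∑ y,
          (1 / (n : ℝ)) * (val x : ℝ) * (P ^ (max i j - min i j)) x y * (val y : ℝ))
        - (α * t) ^ 2)
    (t : ℕ) :
    |varZ t - α * (1 - α) * t| ≤ 2 * α * (1 - α) * t * (lam0 / (1 - lam0)) := by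
  have hn' : (n : ℝ) ≠ 0 := by positivity
  have horth' : ∀ j k, f j ⬝ᵥ f k = if j = k then (n : ℝ) else 0 := fun j k => by
    rw [dotProduct, ← div_left_inj' hn', sum_div, horth]
    split_ifs <;> simp [hn']
  set v : Fin n → ℝ := fun x => val x
  set w : Fin n → ℝ := fun j => (v ⬝ᵥ f j / n) ^ 2
  have hspec := dotProduct_pow_mulVec_div_eq_sum heig hn' horth' v
  have hw₀ : w j₀ = α ^ 2 := by simp [w, v, dotProduct, hf0, hα]
  have hwsum : ∑ j, w j = α := by
    have h := hspec 0
    simp only [pow_zero, one_mulVec, one_mul] at h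
    rw [← h, hα, dotProduct, sum_div, sum_div]
    refine sum_congr rfl fun x _ => ?_
    rcases hval x with hx | hx <;> simp [v, hx]
  have hvarZ : varZ t = ∑ j, w j * powDistSum (lam j) t - (α * t) ^ 2 := by
    have hcorr : ∀ m, ∑ x, ∑ y, 1 / (n : ℝ) * (val x : ℝ) * (P ^ m) x y * (val y : ℝ)
        = ∑ j, lam j ^ m * w j := fun m => by
      rw [← hspec m]
      simp only [v, dotProduct, mulVec, mul_sum, sum_div]
      exact sum_congr rfl fun x _ => sum_congr rfl fun y _ => by ring
    simp_rw [hvar, hcorr, powDistSum, mul_sum]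
    rw [sum_comm (s := univ)]
    refine congrArg (· - _) (sum_congr rfl fun i _ => ?_)
    rw [sum_comm (s := univ)]
    simp_rw [mul_comm (w _)]
  rw [hvarZ]
  exact abs_sum_mul_powDistSum_sub_le (fun j => sq_nonneg _) hwsum hw₀ hl0 hlam1 hexp t

/-- For the simple random walk on a d-regular λ-expander graph started from the
uniform distribution, with a 0/1 labelling val of mean α ∈ (0,1) and
Z_t = Σ_{i<t} val(X_i), the variance satisfies
|Var(Z_t) - α(1-α)t| ≤ 2α(1-α)t·λ/(1-λ).  Here Var(Z_t) = E(Z_t²) - (αt)² is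
written out via the Markov property, and the λ-expander condition is expressed
through an orthonormal eigenbasis of the transition matrix. -/
theorem variance_bound_expander (n d : ℕ) (hn : 0 < n) (hd : 0 < d)
    (G : SimpleGraph (Fin n)) [DecidableRel G.Adj] (hreg : G.IsRegularOfDegree d)
    (P : Matrix (Fin n) (Fin n) ℝ)
    (hP : ∀ x y, P x y = if G.Adj x y then (1 : ℝ) / d else 0)
    (lam : Fin n → ℝ) (f : Fin n → Fin n → ℝ) (j₀ : Fin n)
    (heig : ∀ j, P *ᵥ f j = lam j • f j)
    (horth : ∀ j k, (∑ x, f j x * f k x / n) = if j = k then (1 : ℝ) else 0)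
    (hf0 : ∀ x, f j₀ x = 1) (hl0 : lam j₀ = 1)
    (lam0 : ℝ) (hlam0 : 0 ≤ lam0) (hlam1 : lam0 < 1)
    (hexp : ∀ j, j ≠ j₀ → |lam j| ≤ lam0)
    (val : Fin n → ℕ) (hval : ∀ v, val v = 0 ∨ val v = 1)
    (α : ℝ) (hα : α = (∑ x, (val x : ℝ)) / n) (hα0 : 0 < α) (hα1 : α < 1)
    (varZ : ℕ → ℝ)
    (hvar : ∀ t, varZ t =
      (∑ i ∈ Finset.range t, ∑ j ∈ Finset.range t, ∑ x, ∑ y,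
          (1 / (n : ℝ)) * (val x : ℝ) * (P ^ (max i j - min i j)) x y * (val y : ℝ))
        - (α * t) ^ 2)
    (t : ℕ) :
    |varZ t - α * (1 - α) * t| ≤ 2 * α * (1 - α) * t * (lam0 / (1 - lam0)) :=
  variance_bound_expander_general n hn P lam f j₀ heig horth hf0 hl0 lam0 hlam1 hexp val hval α hα
    varZ hvar t
end

section
/- Let μ ∈ ℝ and σ² ≥ 1, and let D(μ,σ²) = Σ_{k ∈ ℤ} σ⁻¹ φ((k−μ)/σ), where φ(x) = (1/√(2π)) e^{−x²/2} is the standard normal density. Then |1 − D(μ,σ²)| ≤ 1/(√(2π)·σ). -/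
/-!
If `f ≥ 0` is integrable, increasing up to `m` and decreasing afterwards, then
`|∑ₖ f k - ∫ f| ≤ f m`. With `N = ⌊m⌋`, the integral test applies to `f` on `(-∞, N]` and on
`[N + 1, ∞)`: each half-line sum lies between the integral over that half-line and the same
integral plus the endpoint value `f N`, resp. `f (N + 1)`. The remaining integral over `[N, N + 1]`
lies between `min (f N) (f (N + 1))` and `f m`, and `max (f N) (f (N + 1)) ≤ f m`, so the error
is at most `f m` in both directions. The density of `𝒩(μ, σ²)` is such a function, with mode `μ`,
peak value `1 / (√(2π) σ)` and integral `1`.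
-/

open Real MeasureTheory Set ProbabilityTheory
open scoped NNReal

lemma HasSum.int_of_nat_add_of_sub {M : Type*} [AddCommMonoid M] [TopologicalSpace M]
    [ContinuousAdd M] {F : ℤ → M} {a b : M} (N : ℤ)
    (h₁ : HasSum (fun n : ℕ => F (N + 1 + n)) a) (h₂ : HasSum (fun n : ℕ => F (N - n)) b) :
    HasSum F (a + b) := by
  refine (Equiv.addRight (N + 1)).hasSum_iff.1 (HasSum.of_nat_of_neg_add_one ?_ ?_)
  · simpa only [Function.comp_apply, Equiv.coe_addRight, add_comm] using h₁
  · convert h₂ using 3 with n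
    simp only [Function.comp_apply, Equiv.coe_addRight]
    congr 1
    ring

section HalfLine

variable {f : ℝ → ℝ} {a : ℝ}

lemma integral_Ioi_comp_const_add (f : ℝ → ℝ) (a : ℝ) :
    ∫ x in Ioi 0, f (a + x) = ∫ x in Ioi a, f x := by
  rw [← (measurePreserving_add_left volume a).setIntegral_image_emb
    (measurableEmbedding_addLeft a), image_const_add_Ioi, add_zero]

lemma MeasureTheory.IntegrableOn.comp_const_add_Ioi (hf : IntegrableOn f (Ioi a)) :
    IntegrableOn (fun x => f (a + x)) (Ioi 0) := by
  have := (measurePreserving_add_left volume a).integrableOn_image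
    (measurableEmbedding_addLeft a) (f := f) (s := Ioi 0)
  rw [image_const_add_Ioi, add_zero] at this
  exact this.1 hf

lemma AntitoneOn.comp_const_add_Ici (anti : AntitoneOn f (Ici a)) :
    AntitoneOn (fun x => f (a + x)) (Ici 0) := fun x hx y hy hxy =>
  anti (by simpa using hx) (by simpa using hy) (by linarith)

lemma AntitoneOn.summable_comp_const_add (anti : AntitoneOn f (Ici a))
    (hf : IntegrableOn f (Ioi a)) (nonneg : ∀ x ∈ Ioi a, 0 ≤ f x) :
    Summable (fun n : ℕ => f (a + n)) :=
  anti.comp_const_add_Ici.summable_of_integrableOn_Ioi_zero hf.comp_const_add_Ioi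
    fun x hx => nonneg _ (by simpa using hx)

lemma AntitoneOn.tsum_comp_const_add_mem_Icc (anti : AntitoneOn f (Ici a))
    (hf : IntegrableOn f (Ioi a)) (nonneg : ∀ x ∈ Ioi a, 0 ≤ f x) :
    ∑' n : ℕ, f (a + n) ∈ Icc (∫ x in Ioi a, f x) (f a + ∫ x in Ioi a, f x) := by
  have hg₀ : ∀ x ∈ Ioi (0 : ℝ), 0 ≤ f (a + x) := fun x hx => nonneg _ (by simpa using hx)
  rw [← integral_Ioi_comp_const_add]
  refine ⟨anti.comp_const_add_Ici.integral_le_tsum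
    (anti.summable_comp_const_add hf nonneg) hg₀, ?_⟩
  simpa using anti.comp_const_add_Ici.tsum_le_integral hf.comp_const_add_Ioi hg₀

lemma MonotoneOn.comp_neg_Ici (mono : MonotoneOn f (Iic a)) :
    AntitoneOn (fun x => f (-x)) (Ici (-a)) := fun x hx y hy hxy =>
  mono (by simpa [neg_le] using hy) (by simpa [neg_le] using hx) (by linarith)

lemma MonotoneOn.summable_comp_const_sub (mono : MonotoneOn f (Iic a))
    (hf : IntegrableOn f (Iic a)) (nonneg : ∀ x ∈ Iio a, 0 ≤ f x) :
    Summable (fun n : ℕ => f (a - n)) := by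
  have hg : IntegrableOn (fun x => f (-x)) (Ioi (-a)) :=
    IntegrableOn.comp_neg_Ioi (by simpa using hf.mono_set Iio_subset_Iic_self)
  simpa [neg_add_eq_sub] using mono.comp_neg_Ici.summable_comp_const_add hg
    fun x hx => nonneg _ (by simpa [neg_lt] using hx)

lemma MonotoneOn.tsum_comp_const_sub_mem_Icc (mono : MonotoneOn f (Iic a))
    (hf : IntegrableOn f (Iic a)) (nonneg : ∀ x ∈ Iio a, 0 ≤ f x) :
    ∑' n : ℕ, f (a - n) ∈ Icc (∫ x in Iic a, f x) (f a + ∫ x in Iic a, f x) := by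
  have hg : IntegrableOn (fun x => f (-x)) (Ioi (-a)) :=
    IntegrableOn.comp_neg_Ioi (by simpa using hf.mono_set Iio_subset_Iic_self)
  simpa [neg_add_eq_sub] using mono.comp_neg_Ici.tsum_comp_const_add_mem_Icc hg
    fun x hx => nonneg _ (by simpa [neg_lt] using hx)

end HalfLine

section Unimodal

variable {f : ℝ → ℝ} {m : ℝ}

lemma MonotoneOn.apply_le_of_antitoneOn (mono : MonotoneOn f (Iic m))
    (anti : AntitoneOn f (Ici m)) (x : ℝ) : f x ≤ f m := by
  rcases le_total x m with h | h
  · exact mono h self_mem_Iic h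
  · exact anti self_mem_Ici h h

lemma MonotoneOn.min_le_of_antitoneOn (mono : MonotoneOn f (Iic m))
    (anti : AntitoneOn f (Ici m)) {x y z : ℝ} (hxy : x ≤ y) (hyz : y ≤ z) :
    min (f x) (f z) ≤ f y := by
  rcases le_total y m with h | h
  · exact (min_le_left _ _).trans (mono (hxy.trans h) h hxy)
  · exact (min_le_right _ _).trans (anti h (h.trans hyz) hyz)

theorem abs_tsum_intCast_sub_integral_le (hf : Integrable f) (nonneg : 0 ≤ f)
    (mono : MonotoneOn f (Iic m)) (anti : AntitoneOn f (Ici m)) :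
    |∑' k : ℤ, f k - ∫ x, f x| ≤ f m := by
  obtain ⟨N, hN, hN1⟩ : ∃ N : ℤ, (N : ℝ) ≤ m ∧ m ≤ N + 1 :=
    ⟨⌊m⌋, Int.floor_le m, (Int.lt_floor_add_one m).le⟩
  have mono' := mono.mono (Iic_subset_Iic.2 hN)
  have anti' := anti.mono (Ici_subset_Ici.2 hN1)
  have hleft := mono'.tsum_comp_const_sub_mem_Icc hf.integrableOn fun x _ => nonneg x
  have hright := anti'.tsum_comp_const_add_mem_Icc hf.integrableOn fun x _ => nonneg x
  have hsum : ∑' k : ℤ, f k = ∑' n : ℕ, f (N + 1 + n) + ∑' n : ℕ, f (N - n) := by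
    refine (HasSum.int_of_nat_add_of_sub N ?_ ?_).tsum_eq
    · simpa using (anti'.summable_comp_const_add hf.integrableOn fun x _ => nonneg x).hasSum
    · simpa using (mono'.summable_comp_const_sub hf.integrableOn fun x _ => nonneg x).hasSum
  have hint : ∫ x, f x = (∫ x in Iic (N : ℝ), f x) + (∫ x in N..N + 1, f x) +
      ∫ x in Ioi ((N : ℝ) + 1), f x := by
    rw [add_assoc, intervalIntegral.integral_interval_add_Ioi hf.integrableOn hf.integrableOn,
      intervalIntegral.integral_Iic_add_Ioi hf.integrableOn hf.integrableOn]
  have hmid_lower : min (f N) (f (N + 1)) ≤ ∫ x in N..N + 1, f x := by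
    simpa using intervalIntegral.integral_mono_on (a := N) (b := N + 1) (by linarith)
      intervalIntegrable_const hf.intervalIntegrable fun x hx =>
        mono.min_le_of_antitoneOn anti hx.1 hx.2
  have hmid_upper : ∫ x in N..N + 1, f x ≤ f m := by
    simpa using intervalIntegral.integral_mono_on (a := N) (b := N + 1) (by linarith)
      hf.intervalIntegrable intervalIntegrable_const fun x _ => mono.apply_le_of_antitoneOn anti x
  have hmax : max (f N) (f (N + 1)) ≤ f m :=
    max_le (mono.apply_le_of_antitoneOn anti _) (mono.apply_le_of_antitoneOn anti _)
  rw [abs_le, hsum, hint]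
  constructor <;> linarith [min_add_max (f N) (f (N + 1)), hleft.1, hleft.2, hright.1, hright.2]

end Unimodal

namespace ProbabilityTheory

lemma gaussianPDFReal_monotoneOn (μ : ℝ) (v : ℝ≥0) :
    MonotoneOn (gaussianPDFReal μ v) (Iic μ) := by
  intro x hx y hy hxy
  simp only [gaussianPDFReal]
  gcongr _ * rexp (-?_ / _)
  nlinarith [mem_Iic.1 hx, mem_Iic.1 hy]

lemma gaussianPDFReal_antitoneOn (μ : ℝ) (v : ℝ≥0) :
    AntitoneOn (gaussianPDFReal μ v) (Ici μ) := by
  intro x hx y hy hxy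
  simp only [gaussianPDFReal]
  gcongr _ * rexp (-?_ / _)
  nlinarith [mem_Ici.1 hx, mem_Ici.1 hy]

lemma gaussianPDFReal_eq_of_coe_eq_sq (μ : ℝ) {v : ℝ≥0} {σ : ℝ} (hσ : 0 < σ)
    (hv : (v : ℝ) = σ ^ 2) (x : ℝ) :
    gaussianPDFReal μ v x = σ⁻¹ * ((√(2 * π))⁻¹ * exp (-((x - μ) / σ) ^ 2 / 2)) := by
  rw [gaussianPDFReal, hv, sqrt_mul (by positivity), sqrt_sq hσ.le, mul_inv, div_pow]
  field_simp

end ProbabilityTheory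

theorem discretized_normal_constant_general (μ σ : ℝ) (hσ : 0 < σ) :
    |1 - ∑' k : ℤ, σ⁻¹ * ((Real.sqrt (2 * Real.pi))⁻¹ * Real.exp (-(((k : ℝ) - μ) / σ) ^ 2 / 2))|
      ≤ 1 / (Real.sqrt (2 * Real.pi) * σ) := by
  obtain ⟨v, hv⟩ : ∃ v : ℝ≥0, (v : ℝ) = σ ^ 2 := ⟨⟨σ ^ 2, sq_nonneg σ⟩, rfl⟩
  have hv₀ : v ≠ 0 := by
    rintro rfl
    exact (pow_pos hσ 2).ne (by simpa using hv)
  have key := abs_tsum_intCast_sub_integral_le (integrable_gaussianPDFReal μ v)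
    (gaussianPDFReal_nonneg μ v) (gaussianPDFReal_monotoneOn μ v)
    (gaussianPDFReal_antitoneOn μ v)
  rw [integral_gaussianPDFReal_eq_one μ hv₀, abs_sub_comm] at key
  simpa [gaussianPDFReal_eq_of_coe_eq_sq μ hσ hv, mul_comm] using key

/-- The normalizing constant D(μ,σ²) = Σ_{k∈ℤ} σ⁻¹ φ((k-μ)/σ) of the discretized
normal distribution satisfies |1 - D(μ,σ²)| ≤ 1/(√(2π)σ) when σ² ≥ 1. -/
theorem discretized_normal_constant (μ σ : ℝ) (hσ : 0 < σ) (hσ2 : 1 ≤ σ ^ 2) :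
    |1 - ∑' k : ℤ, σ⁻¹ * ((Real.sqrt (2 * Real.pi))⁻¹ * Real.exp (-(((k : ℝ) - μ) / σ) ^ 2 / 2))|
      ≤ 1 / (Real.sqrt (2 * Real.pi) * σ) :=
  discretized_normal_constant_general μ σ hσ
end

section
/- Let σ > 0 and t ≥ 1, let φ_t(θ) = e^{−tσ²θ²/2} (extended to all θ ∈ ℝ), and define F(θ) = Σ_{k ∈ ℤ} φ_t(θ + 2πk) for θ ∈ [−π, π]. Then for every θ ∈ [−π, π], |φ_t(θ) − F(θ)| ≤ 2e^{−σ²t}/(1 − e^{−σ²t}) ≤ 2/(σ²t). -/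
lemma key_sq (θ : ℝ) (hθ : θ ∈ Set.Icc (-Real.pi) Real.pi) (k : ℤ) (hk : k ≠ 0) :
    2 * (k.natAbs : ℝ) ≤ (θ + 2 * Real.pi * k) ^ 2 := by
  obtain ⟨h1, h2⟩ := hθ
  have hπ := Real.pi_gt_three
  have hm : (1 : ℝ) ≤ (k.natAbs : ℝ) := by
    have : 1 ≤ k.natAbs := Nat.one_le_iff_ne_zero.mpr (Int.natAbs_ne_zero.mpr hk)
    exact_mod_cast this
  have habs : |(k : ℝ)| = (k.natAbs : ℝ) := by
    rw [Nat.cast_natAbs, Int.cast_abs]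
  have hge : 2 * Real.pi * (k.natAbs : ℝ) - Real.pi ≤ |θ + 2 * Real.pi * k| := by
    have h3 : |2 * Real.pi * (k : ℝ)| - |θ| ≤ |θ + 2 * Real.pi * k| := by
      have := abs_sub_abs_le_abs_sub (2 * Real.pi * (k : ℝ)) (-θ)
      simpa [sub_neg_eq_add, add_comm] using this
    have h4 : |2 * Real.pi * (k : ℝ)| = 2 * Real.pi * (k.natAbs : ℝ) := by
      rw [abs_mul, habs, abs_of_pos (by positivity)]
    have h5 : |θ| ≤ Real.pi := abs_le.mpr ⟨h1, h2⟩
    linarith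
  have hpos : (0:ℝ) ≤ 2 * Real.pi * (k.natAbs : ℝ) - Real.pi := by nlinarith
  have hsq : (2 * Real.pi * (k.natAbs : ℝ) - Real.pi) ^ 2 ≤ (θ + 2 * Real.pi * k) ^ 2 := by
    calc (2 * Real.pi * (k.natAbs : ℝ) - Real.pi) ^ 2
        ≤ |θ + 2 * Real.pi * k| ^ 2 := by
          apply pow_le_pow_left₀ hpos hge
      _ = (θ + 2 * Real.pi * k) ^ 2 := sq_abs _
  nlinarith [mul_nonneg (by nlinarith : (0:ℝ) ≤ Real.pi ^ 2 - 9)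
    (sq_nonneg (2 * (k.natAbs : ℝ) - 1)), sq_nonneg ((k.natAbs : ℝ) - 1)]

/-- Comparison between the Gaussian characteristic function φ_t(θ) = e^{-tσ²θ²/2}
and its periodization F(θ) = Σ_{k∈ℤ} φ_t(θ + 2πk): for θ ∈ [-π,π],
|φ_t(θ) - F(θ)| ≤ 2e^{-σ²t}/(1 - e^{-σ²t}) ≤ 2/(σ²t). -/
theorem gaussian_periodization_close (σ t : ℝ) (hσ : 0 < σ) (ht : 1 ≤ t)
    (φ : ℝ → ℝ) (hφ : ∀ θ, φ θ = Real.exp (-(t * σ ^ 2 * θ ^ 2) / 2))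
    (F : ℝ → ℝ) (hF : ∀ θ, F θ = ∑' k : ℤ, φ (θ + 2 * Real.pi * k))
    (θ : ℝ) (hθ : θ ∈ Set.Icc (-Real.pi) Real.pi) :
    |φ θ - F θ| ≤ 2 * Real.exp (-σ ^ 2 * t) / (1 - Real.exp (-σ ^ 2 * t)) ∧
      2 * Real.exp (-σ ^ 2 * t) / (1 - Real.exp (-σ ^ 2 * t)) ≤ 2 / (σ ^ 2 * t) := by
  set x : ℝ := σ ^ 2 * t with hxdef
  have hx : 0 < x := by positivity
  set r : ℝ := Real.exp (-x) with hrdef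
  have hr0 : 0 < r := Real.exp_pos _
  have hr1 : r < 1 := Real.exp_lt_one_iff.mpr (by linarith)
  -- pointwise bound
  have hbound : ∀ k : ℤ, k ≠ 0 → φ (θ + 2 * Real.pi * k) ≤ r ^ k.natAbs := by
    intro k hk
    rw [hφ, hrdef, ← Real.exp_nat_mul]
    apply Real.exp_le_exp.mpr
    have h2 := key_sq θ hθ k hk
    have hts : 0 < t * σ ^ 2 := by positivity
    have : x * (k.natAbs : ℝ) ≤ t * σ ^ 2 * (θ + 2 * Real.pi * k) ^ 2 / 2 := by
      rw [hxdef]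
      nlinarith
    linarith
  -- geometric sums
  have hgeo : HasSum (fun n : ℕ => r ^ (n + 1)) (r / (1 - r)) := by
    have := (hasSum_geometric_of_lt_one hr0.le hr1).mul_left r
    simpa [pow_succ, mul_comm, div_eq_mul_inv] using this
  set g : ℤ → ℝ := fun k => if k = 0 then 0 else r ^ k.natAbs with hgdef
  have hg_nat : HasSum (fun n : ℕ => g n) (r / (1 - r)) := by
    have hf1 : ∀ n : ℕ, g (((n + 1 : ℕ) : ℤ)) = r ^ (n + 1) := by
      intro n
      have h0 : ((n + 1 : ℕ) : ℤ) ≠ 0 := by exact_mod_cast Nat.succ_ne_zero n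
      have h2 : ((n + 1 : ℕ) : ℤ).natAbs = n + 1 := Int.natAbs_natCast _
      simp only [hgdef]
      rw [if_neg h0, h2]
    have h1 : HasSum (fun n : ℕ => g ((↑(n + 1) : ℤ))) (r / (1 - r)) :=
      hgeo.congr_fun fun n => (hf1 n).symm
    have h2 := (hasSum_nat_add_iff (f := fun n : ℕ => g (n : ℤ)) 1).mp h1
    simpa [hgdef] using h2
  have hg_neg : HasSum (fun n : ℕ => g (-((n : ℤ) + 1))) (r / (1 - r)) := by
    refine hgeo.congr_fun fun n => ?_
    have h0 : -((n : ℤ) + 1) ≠ 0 := by omega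
    have h2 : (-((n : ℤ) + 1)).natAbs = n + 1 := by omega
    simp only [hgdef]
    rw [if_neg h0, h2]
  have hg : HasSum g (2 * r / (1 - r)) := by
    have := hg_nat.of_nat_of_neg_add_one hg_neg
    convert this using 1
    ring
  -- summability of the periodization terms
  have hφnonneg : ∀ y : ℝ, 0 ≤ φ y := fun y => by rw [hφ]; positivity
  have hbig : Summable (fun k : ℤ => g k + if k = 0 then (1:ℝ) else 0) :=
    hg.summable.add (summable_of_ne_finset_zero (s := {0})
      (fun k hk => by simp at hk; simp [hk]))
  have hsum : Summable (fun k : ℤ => φ (θ + 2 * Real.pi * k)) := by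
    refine Summable.of_nonneg_of_le (fun k => hφnonneg _) (fun k => ?_) hbig
    by_cases hk : k = 0
    · simp only [hk, hgdef, if_pos rfl, zero_add]
      rw [hφ]
      refine Real.exp_le_one_iff.mpr ?_
      have h0 : 0 ≤ t * σ ^ 2 * θ ^ 2 := by positivity
      linarith
    · simp only [hgdef, if_neg hk, add_zero]
      simpa using hbound k hk
  -- the ite sum
  have hite_le : ∀ k : ℤ, (if k = 0 then 0 else φ (θ + 2 * Real.pi * k)) ≤ g k := by
    intro k
    by_cases hk : k = 0
    · simp [hk, hgdef]
    · simpa [hgdef, hk] using hbound k hk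
  have hite_nonneg : ∀ k : ℤ, 0 ≤ (if k = 0 then 0 else φ (θ + 2 * Real.pi * k)) := by
    intro k; by_cases hk : k = 0 <;> simp [hk, hφnonneg]
  have hite_sum : Summable (fun k : ℤ => if k = 0 then 0 else φ (θ + 2 * Real.pi * k)) :=
    Summable.of_nonneg_of_le hite_nonneg hite_le hg.summable
  have hsplit : F θ = φ θ + ∑' k : ℤ, if k = 0 then 0 else φ (θ + 2 * Real.pi * k) := by
    rw [hF, Summable.tsum_eq_add_tsum_ite hsum 0]
    norm_num
  constructor
  · have h1 : |φ θ - F θ| = ∑' k : ℤ, if k = 0 then 0 else φ (θ + 2 * Real.pi * k) := by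
      rw [hsplit]
      rw [abs_of_nonpos (by simp; exact tsum_nonneg hite_nonneg)]
      ring
    rw [h1]
    have h2 : (∑' k : ℤ, if k = 0 then 0 else φ (θ + 2 * Real.pi * k)) ≤ 2 * r / (1 - r) := by
      rw [← hg.tsum_eq]
      exact Summable.tsum_le_tsum hite_le hite_sum hg.summable
    have : (-σ ^ 2 * t) = -x := by rw [hxdef]; ring
    rw [this, ← hrdef]
    exact h2
  · have hx1 : (-σ ^ 2 * t) = -x := by rw [hxdef]; ring
    rw [hx1, ← hrdef]
    rw [div_le_div_iff₀ (by linarith) hx]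
    have key : x * r ≤ 1 - r := by
      have h := Real.add_one_le_exp x
      have hmul : Real.exp (-x) * Real.exp x = 1 := by
        rw [← Real.exp_add]; simp
      nlinarith
    nlinarith
end
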